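/- arXiv:2006.12277 — 3 statements merged into one kernel-verified Lean document; each statement's English description precedes it below -/
import Mathlib

section
/- Let β : (0,T) → ℝ^{d×d} be differentiable in t with β(t) ≠ 0 wherever |β(t)| > 1. Then for the map F(β) := (|β|-1)_+ · β/|β|, the pointwise identity (d/dt F(β)) · β̇ = χ_{|β|>1} / |β| · ( |β̇|² (|β|-1) + (∂_t |β|)² ) holds, and in particular (d/dt F(β)) · β̇ ≥ 0. -/
open scoped InnerProductSpace

theorem stmt1 (d : ℕ) (T : ℝ) (hT : 0 < T)
    (β : ℝ → EuclideanSpace ℝ (Fin d × Fin d))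
    (hdiff : ∀ s ∈ Set.Ioo 0 T, DifferentiableAt ℝ β s)
    (hne : ∀ s ∈ Set.Ioo 0 T, 1 < ‖β s‖ → β s ≠ 0)
    (t : ℝ) (ht : t ∈ Set.Ioo 0 T)
    (b : EuclideanSpace ℝ (Fin d × Fin d)) (hb : HasDerivAt β b t)
    (n : ℝ) (hn : HasDerivAt (fun s => ‖β s‖) n t)
    (f : EuclideanSpace ℝ (Fin d × Fin d))
    (hf : HasDerivAt (fun s => (max (‖β s‖ - 1) 0 / ‖β s‖) • β s) f t) :
    ⟪f, b⟫_ℝ = (if 1 < ‖β t‖ then (1:ℝ) else 0) / ‖β t‖ *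
      (‖b‖ ^ 2 * (‖β t‖ - 1) + n ^ 2) ∧ 0 ≤ ⟪f, b⟫_ℝ := by
  classical
  have hcont : ContinuousAt (fun s => ‖β s‖) t := hn.continuousAt
  rcases lt_trichotomy 1 (‖β t‖) with hmt | hmt | hmt
  · -- case ‖β t‖ > 1
    have hm0 : (‖β t‖ : ℝ) ≠ 0 := by positivity
    have hev : ∀ᶠ s in nhds t, 1 < ‖β s‖ := hcont (Ioi_mem_nhds hmt)
    -- derivative of the smooth formula
    have hinv : HasDerivAt (fun s => (‖β s‖)⁻¹) (-n / ‖β t‖ ^ 2) t := hn.inv hm0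
    have hsmul : HasDerivAt (fun s => (‖β s‖)⁻¹ • β s)
        ((‖β t‖)⁻¹ • b + (-n / ‖β t‖ ^ 2) • β t) t := hinv.smul hb
    have hg : HasDerivAt (fun s => β s - (‖β s‖)⁻¹ • β s)
        (b - ((‖β t‖)⁻¹ • b + (-n / ‖β t‖ ^ 2) • β t)) t := hb.sub hsmul
    have heq : (fun s => (max (‖β s‖ - 1) 0 / ‖β s‖) • β s)
        =ᶠ[nhds t] fun s => β s - (‖β s‖)⁻¹ • β s := by
      filter_upwards [hev] with s hs
      have hs0 : (‖β s‖ : ℝ) ≠ 0 := by positivity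
      have : max (‖β s‖ - 1) 0 = ‖β s‖ - 1 := max_eq_left (by linarith)
      rw [this]
      have : (‖β s‖ - 1) / ‖β s‖ = 1 - (‖β s‖)⁻¹ := by field_simp
      rw [this, sub_smul, one_smul]
    have hf2 : HasDerivAt (fun s => (max (‖β s‖ - 1) 0 / ‖β s‖) • β s)
        (b - ((‖β t‖)⁻¹ • b + (-n / ‖β t‖ ^ 2) • β t)) t := hg.congr_of_eventuallyEq heq
    have hfval : f = b - ((‖β t‖)⁻¹ • b + (-n / ‖β t‖ ^ 2) • β t) := hf.unique hf2
    -- inner product of β t and b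
    have h1 : HasDerivAt (fun s => ⟪β s, β s⟫_ℝ) (⟪β t, b⟫_ℝ + ⟪b, β t⟫_ℝ) t :=
      hb.inner ℝ hb
    have h2 : HasDerivAt (fun s => ‖β s‖ * ‖β s‖) (n * ‖β t‖ + ‖β t‖ * n) t := hn.mul hn
    have h3 : (fun s => ⟪β s, β s⟫_ℝ) = fun s => ‖β s‖ * ‖β s‖ := by
      funext s; exact real_inner_self_eq_norm_mul_norm (β s)
    have h4 : ⟪β t, b⟫_ℝ + ⟪b, β t⟫_ℝ = n * ‖β t‖ + ‖β t‖ * n := by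
      refine HasDerivAt.unique ?_ h2
      rw [← h3]; exact h1
    have hcomm : ⟪β t, b⟫_ℝ = ⟪b, β t⟫_ℝ := real_inner_comm _ _
    have hβb : ⟪β t, b⟫_ℝ = ‖β t‖ * n := by linarith
    have hbb : ⟪b, b⟫_ℝ = ‖b‖ ^ 2 := real_inner_self_eq_norm_sq b
    have hfb : ⟪f, b⟫_ℝ = ‖b‖ ^ 2 - (‖β t‖)⁻¹ * ‖b‖ ^ 2 - (-n / ‖β t‖ ^ 2) * (‖β t‖ * n) := by
      rw [hfval, inner_sub_left, inner_add_left, real_inner_smul_left, real_inner_smul_left,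
        hbb, hβb]
      ring
    have hval : ⟪f, b⟫_ℝ = 1 / ‖β t‖ * (‖b‖ ^ 2 * (‖β t‖ - 1) + n ^ 2) := by
      rw [hfb]; field_simp; ring
    constructor
    · rw [if_pos hmt]; exact hval
    · rw [hval]
      have h5 : (0:ℝ) ≤ ‖b‖ ^ 2 * (‖β t‖ - 1) := by
        apply mul_nonneg (by positivity); linarith
      have h6 : (0:ℝ) ≤ 1 / ‖β t‖ := by positivity
      nlinarith [sq_nonneg n]
  · -- case ‖β t‖ = 1
    have hm1 : ‖β t‖ = 1 := hmt.symm
    have hFt : (max (‖β t‖ - 1) 0 / ‖β t‖) • β t = 0 := by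
      rw [hm1]; norm_num
    -- q s = max (‖β s‖ - 1) 0 * ‖β s‖
    have hq_eq : (fun s => ⟪(max (‖β s‖ - 1) 0 / ‖β s‖) • β s, β s⟫_ℝ)
        = fun s => max (‖β s‖ - 1) 0 * ‖β s‖ := by
      funext s
      rw [real_inner_smul_left, real_inner_self_eq_norm_mul_norm]
      rcases eq_or_ne (‖β s‖) 0 with h | h
      · simp [h]
      · field_simp
    have hq0 : HasDerivAt (fun s => ⟪(max (‖β s‖ - 1) 0 / ‖β s‖) • β s, β s⟫_ℝ)
        (⟪(max (‖β t‖ - 1) 0 / ‖β t‖) • β t, b⟫_ℝ + ⟪f, β t⟫_ℝ) t := hf.inner ℝ hb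
    rw [hFt] at hq0
    simp only [inner_zero_left, zero_add] at hq0
    have hq : HasDerivAt (fun s => max (‖β s‖ - 1) 0 * ‖β s‖) (⟪f, β t⟫_ℝ) t := by
      rw [← hq_eq]; exact hq0
    have hqnonneg : ∀ s, 0 ≤ max (‖β s‖ - 1) 0 * ‖β s‖ := fun s =>
      mul_nonneg (le_max_right _ _) (norm_nonneg _)
    have hqt : max (‖β t‖ - 1) 0 * ‖β t‖ = 0 := by rw [hm1]; norm_num
    have hqmin : IsLocalMin (fun s => max (‖β s‖ - 1) 0 * ‖β s‖) t := by
      apply Filter.Eventually.of_forall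
      intro s; simpa [hqt] using hqnonneg s
    have hA : ⟪f, β t⟫_ℝ = 0 := hqmin.hasDerivAt_eq_zero hq
    -- step B: n = 0
    have hp : HasDerivAt (fun s => (‖β s‖ - 1) * ‖β s‖) (n * ‖β t‖ + (‖β t‖ - 1) * n) t :=
      (hn.sub_const 1).mul hn
    have hr : HasDerivAt (fun s => max (‖β s‖ - 1) 0 * ‖β s‖ - (‖β s‖ - 1) * ‖β s‖)
        (⟪f, β t⟫_ℝ - (n * ‖β t‖ + (‖β t‖ - 1) * n)) t := hq.sub hp
    have hrmin : IsLocalMin (fun s => max (‖β s‖ - 1) 0 * ‖β s‖ - (‖β s‖ - 1) * ‖β s‖) t := by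
      apply Filter.Eventually.of_forall
      intro s
      have h1 : (‖β s‖ - 1) * ‖β s‖ ≤ max (‖β s‖ - 1) 0 * ‖β s‖ :=
        mul_le_mul_of_nonneg_right (le_max_left _ _) (norm_nonneg _)
      have h2 : max (‖β t‖ - 1) 0 * ‖β t‖ - (‖β t‖ - 1) * ‖β t‖ = 0 := by rw [hm1]; norm_num
      simp only [h2]; linarith
    have hB : ⟪f, β t⟫_ℝ - (n * ‖β t‖ + (‖β t‖ - 1) * n) = 0 := hrmin.hasDerivAt_eq_zero hr
    have hn0 : n = 0 := by rw [hm1, hA] at hB; linarith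
    -- step C: derivative of max (‖β s‖ - 1) 0 is 0
    have hm0 : (‖β t‖ : ℝ) ≠ 0 := by rw [hm1]; norm_num
    have hdiv : HasDerivAt (fun s => (max (‖β s‖ - 1) 0 * ‖β s‖) / ‖β s‖)
        ((⟪f, β t⟫_ℝ * ‖β t‖ - (max (‖β t‖ - 1) 0 * ‖β t‖) * n) / ‖β t‖ ^ 2) t :=
      hq.div hn hm0
    have hdval : (⟪f, β t⟫_ℝ * ‖β t‖ - (max (‖β t‖ - 1) 0 * ‖β t‖) * n) / ‖β t‖ ^ 2 = 0 := by
      rw [hA, hqt, hn0]; ring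
    rw [hdval] at hdiv
    have hev : ∀ᶠ s in nhds t, (0:ℝ) < ‖β s‖ := by
      have := hcont (Ioi_mem_nhds (show (0:ℝ) < ‖β t‖ by rw [hm1]; norm_num))
      exact this
    have hplus : HasDerivAt (fun s => max (‖β s‖ - 1) 0) 0 t := by
      apply hdiv.congr_of_eventuallyEq
      filter_upwards [hev] with s hs
      field_simp
    -- step D: f = 0
    have hw1 : HasDerivAt (fun s => ⟪(max (‖β s‖ - 1) 0 / ‖β s‖) • β s, f⟫_ℝ)
        (⟪(max (‖β t‖ - 1) 0 / ‖β t‖) • β t, (0:EuclideanSpace ℝ (Fin d × Fin d))⟫_ℝ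
          + ⟪f, f⟫_ℝ) t := hf.inner ℝ (hasDerivAt_const t f)
    rw [hFt] at hw1
    simp only [inner_zero_left, zero_add] at hw1
    have hw2 : HasDerivAt (fun s => ‖f‖ * max (‖β s‖ - 1) 0) (‖f‖ * 0) t :=
      hplus.const_mul ‖f‖
    have hw : HasDerivAt
        (fun s => ⟪(max (‖β s‖ - 1) 0 / ‖β s‖) • β s, f⟫_ℝ + ‖f‖ * max (‖β s‖ - 1) 0)
        (⟪f, f⟫_ℝ + ‖f‖ * 0) t := hw1.add hw2
    have hwmin : IsLocalMin
        (fun s => ⟪(max (‖β s‖ - 1) 0 / ‖β s‖) • β s, f⟫_ℝ + ‖f‖ * max (‖β s‖ - 1) 0) t := by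
      apply Filter.Eventually.of_forall
      intro s
      have hFnorm : ‖(max (‖β s‖ - 1) 0 / ‖β s‖) • β s‖ ≤ max (‖β s‖ - 1) 0 := by
        rw [norm_smul]
        rcases eq_or_ne (‖β s‖) 0 with h | h
        · simp [h]
        · have hpos : 0 < ‖β s‖ := lt_of_le_of_ne (norm_nonneg _) (Ne.symm h)
          rw [Real.norm_eq_abs, abs_of_nonneg (div_nonneg (le_max_right _ _) hpos.le)]
          rw [div_mul_cancel₀ _ h]
      have habs : |⟪(max (‖β s‖ - 1) 0 / ‖β s‖) • β s, f⟫_ℝ|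
          ≤ ‖(max (‖β s‖ - 1) 0 / ‖β s‖) • β s‖ * ‖f‖ := abs_real_inner_le_norm _ _
      have hlb : -(max (‖β s‖ - 1) 0 * ‖f‖) ≤ ⟪(max (‖β s‖ - 1) 0 / ‖β s‖) • β s, f⟫_ℝ := by
        have := neg_abs_le (⟪(max (‖β s‖ - 1) 0 / ‖β s‖) • β s, f⟫_ℝ)
        have h3 : ‖(max (‖β s‖ - 1) 0 / ‖β s‖) • β s‖ * ‖f‖ ≤ max (‖β s‖ - 1) 0 * ‖f‖ :=
          mul_le_mul_of_nonneg_right hFnorm (norm_nonneg _)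
        linarith
      have hvt : ⟪(max (‖β t‖ - 1) 0 / ‖β t‖) • β t, f⟫_ℝ + ‖f‖ * max (‖β t‖ - 1) 0 = 0 := by
        rw [hFt, hm1]; simp
      simp only [hvt]
      nlinarith [hlb]
    have hD : ⟪f, f⟫_ℝ + ‖f‖ * 0 = 0 := hwmin.hasDerivAt_eq_zero hw
    have hf0 : f = 0 := by
      rw [mul_zero, add_zero] at hD
      exact inner_self_eq_zero.mp hD
    rw [hf0]
    simp [hm1]
  · -- case ‖β t‖ < 1
    have hev : ∀ᶠ s in nhds t, ‖β s‖ < 1 := hcont (Iio_mem_nhds hmt)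
    have hg : HasDerivAt (fun _ : ℝ => (0 : EuclideanSpace ℝ (Fin d × Fin d))) 0 t :=
      hasDerivAt_const t 0
    have heq : (fun s => (max (‖β s‖ - 1) 0 / ‖β s‖) • β s)
        =ᶠ[nhds t] fun _ => (0 : EuclideanSpace ℝ (Fin d × Fin d)) := by
      filter_upwards [hev] with s hs
      have : max (‖β s‖ - 1) 0 = 0 := max_eq_right (by linarith)
      simp [this]
    have hf0 : f = 0 := hf.unique (hg.congr_of_eventuallyEq heq)
    rw [hf0]
    rw [if_neg (by linarith)]
    simp
end

section
/- Let H be a Hilbert space, β ∈ L²(0,T; H), and h ∈ (0, T/2). Then h^{-1} ∫₀^{T-2h} ‖β(t+h) - β(t)‖² dt ≤ 4 h^{-2} ∫₀^{T-h} ∫₀^h ‖β(t+τ) - β(t)‖² dτ dt. -/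
/-!
For `t ∈ (0, T - 2h)` and `τ ∈ (0, h)` the triangle inequality through `β (t + τ)` gives
`‖β (t + h) - β t‖² ≤ 2 ‖β (t + h) - β (t + τ)‖² + 2 ‖β (t + τ) - β t‖²`.
Averaging over `τ` and integrating over `t`, the second term is part of the right-hand side, and
the first becomes part of it after the change of variables `(s, σ) = (t + τ, h - τ)`.
The argument runs in `ℝ≥0∞`; since `β ∈ L²` makes the right-hand side finite, the Bochner
integrals can then be read off the lower Lebesgue integrals.
-/

open MeasureTheory Set Function
open scoped ENNReal

theorem lintegral_Ioc_comp_add_right (f : ℝ → ℝ≥0∞) (a b c : ℝ) :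
    ∫⁻ x in Ioc a b, f (x + c) = ∫⁻ x in Ioc (a + c) (b + c), f x := by
  have := (measurePreserving_add_right volume c).setLIntegral_comp_preimage_emb
    (measurableEmbedding_addRight c) f (Ioc (a + c) (b + c))
  rwa [preimage_add_const_Ioc, add_sub_cancel_right, add_sub_cancel_right] at this

theorem lintegral_Ioc_comp_sub_left (f : ℝ → ℝ≥0∞) (a b c : ℝ) :
    ∫⁻ x in Ioc a b, f (c - x) = ∫⁻ x in Ioc (c - b) (c - a), f x := by
  have := (volume.measurePreserving_sub_left c).setLIntegral_comp_preimage_emb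
    (measurableEmbedding_subLeft c) f (Ico (c - b) (c - a))
  rwa [preimage_const_sub_Ico, sub_sub_cancel, sub_sub_cancel,
    Measure.restrict_congr_set Ico_ae_eq_Ioc] at this

theorem edist_sq_le_two_mul_add {E : Type*} [PseudoEMetricSpace E] (x y z : E) :
    edist x z ^ 2 ≤ 2 * (edist x y ^ 2 + edist y z ^ 2) := by
  have h := ENNReal.rpow_add_le_mul_rpow_add_rpow (edist x y) (edist y z) one_le_two
  norm_num [ENNReal.rpow_two] at h
  exact (pow_le_pow_left' (edist_triangle x y z) 2).trans h

theorem lintegral_Ioc_lintegral_Ioc_comp_shift_le {D : ℝ → ℝ → ℝ≥0∞}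
    (hD : Measurable (uncurry D)) (a h : ℝ) :
    ∫⁻ t in Ioc 0 a, ∫⁻ τ in Ioc 0 h, D (t + h) (t + τ) ≤
      ∫⁻ s in Ioc 0 (a + h), ∫⁻ σ in Ioc 0 h, D (s + σ) s := by
  calc ∫⁻ t in Ioc 0 a, ∫⁻ τ in Ioc 0 h, D (t + h) (t + τ)
      = ∫⁻ τ in Ioc 0 h, ∫⁻ t in Ioc 0 a, D (t + τ + (h - τ)) (t + τ) := by
        simp_rw [add_add_sub_cancel]
        exact lintegral_lintegral_swap (hD.comp ((measurable_fst.add_const h).prodMk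
          (measurable_fst.add measurable_snd))).aemeasurable
    _ = ∫⁻ τ in Ioc 0 h, ∫⁻ s in Ioc τ (a + τ), D (s + (h - τ)) s := by
        refine lintegral_congr fun τ => ?_
        rw [lintegral_Ioc_comp_add_right (fun s => D (s + (h - τ)) s), zero_add]
    _ ≤ ∫⁻ τ in Ioc 0 h, ∫⁻ s in Ioc 0 (a + h), D (s + (h - τ)) s :=
        setLIntegral_mono' measurableSet_Ioc fun τ hτ =>
          lintegral_mono_set (Ioc_subset_Ioc hτ.1.le (by linarith [hτ.2]))
    _ = ∫⁻ s in Ioc 0 (a + h), ∫⁻ τ in Ioc 0 h, D (s + (h - τ)) s :=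
        lintegral_lintegral_swap (hD.comp ((measurable_snd.add
          (measurable_const.sub measurable_fst)).prodMk measurable_snd)).aemeasurable
    _ = ∫⁻ s in Ioc 0 (a + h), ∫⁻ σ in Ioc 0 h, D (s + σ) s := by
        refine lintegral_congr fun s => ?_
        rw [lintegral_Ioc_comp_sub_left (fun σ => D (s + σ) s), sub_self, sub_zero]

theorem lintegral_Ioc_lintegral_Ioc_edist_sq_ne_top {E : Type*}
    [SeminormedAddCommGroup E] {β : ℝ → E} (hβ : StronglyMeasurable β) {b h : ℝ} (hh : 0 ≤ h)
    (hβ_sq : ∫⁻ s in Ioc 0 (b + h), ‖β s‖ₑ ^ 2 ≠ ∞) :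
    ∫⁻ t in Ioc 0 b, ∫⁻ τ in Ioc 0 h, edist (β (t + τ)) (β t) ^ 2 ≠ ∞ := by
  set C := ∫⁻ s in Ioc 0 (b + h), ‖β s‖ₑ ^ 2
  have hβ_sq_meas : Measurable fun s => ‖β s‖ₑ ^ 2 := hβ.enorm.pow_const 2
  have hinner : ∀ t ∈ Ioc 0 b,
      ∫⁻ τ in Ioc 0 h, edist (β (t + τ)) (β t) ^ 2 ≤
        2 * (C + ENNReal.ofReal h * ‖β t‖ₑ ^ 2) := by
    intro t ht
    have hshift : ∫⁻ τ in Ioc 0 h, ‖β (τ + t)‖ₑ ^ 2 ≤ C := by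
      rw [lintegral_Ioc_comp_add_right (fun s => ‖β s‖ₑ ^ 2), zero_add]
      exact lintegral_mono_set (Ioc_subset_Ioc ht.1.le (by linarith [ht.2]))
    calc ∫⁻ τ in Ioc 0 h, edist (β (t + τ)) (β t) ^ 2
        ≤ ∫⁻ τ in Ioc 0 h, 2 * (‖β (τ + t)‖ₑ ^ 2 + ‖β t‖ₑ ^ 2) := by
          refine lintegral_mono fun τ => ?_
          rw [add_comm t τ, ← edist_zero_right, ← edist_zero_right (β t), edist_comm (β t)]
          exact edist_sq_le_two_mul_add _ _ _
      _ = 2 * ((∫⁻ τ in Ioc 0 h, ‖β (τ + t)‖ₑ ^ 2) + ENNReal.ofReal h * ‖β t‖ₑ ^ 2) := by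
          rw [lintegral_const_mul' _ _ ENNReal.ofNat_ne_top,
            lintegral_add_right _ measurable_const, setLIntegral_const, Real.volume_Ioc, sub_zero,
            mul_comm (‖β t‖ₑ ^ 2)]
      _ ≤ 2 * (C + ENNReal.ofReal h * ‖β t‖ₑ ^ 2) := by grw [hshift]
  have hβ_sq_b : ∫⁻ s in Ioc 0 b, ‖β s‖ₑ ^ 2 ≠ ∞ :=
    ne_top_of_le_ne_top hβ_sq (lintegral_mono_set (Ioc_subset_Ioc_right (by linarith)))
  refine ne_top_of_le_ne_top ?_ (setLIntegral_mono' measurableSet_Ioc hinner)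
  rw [lintegral_const_mul' _ _ ENNReal.ofNat_ne_top, lintegral_add_left measurable_const,
    setLIntegral_const, Real.volume_Ioc, lintegral_const_mul _ hβ_sq_meas]
  finiteness

theorem ofReal_mul_lintegral_edist_sq_le {E : Type*} [PseudoEMetricSpace E] {β : ℝ → E}
    (hβ : StronglyMeasurable β) (a : ℝ) {h : ℝ} (hh : 0 ≤ h) :
    ENNReal.ofReal h * ∫⁻ t in Ioc 0 a, edist (β (t + h)) (β t) ^ 2 ≤
      4 * ∫⁻ t in Ioc 0 (a + h), ∫⁻ τ in Ioc 0 h, edist (β (t + τ)) (β t) ^ 2 := by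
  set D : ℝ → ℝ → ℝ≥0∞ := fun x y => edist (β x) (β y) ^ 2
  have hD : Measurable (uncurry D) :=
    ((hβ.comp_measurable measurable_fst).edist
      (hβ.comp_measurable measurable_snd)).measurable.pow_const 2
  set R := ∫⁻ t in Ioc 0 (a + h), ∫⁻ τ in Ioc 0 h, D (t + τ) t
  have hfar : ∫⁻ t in Ioc 0 a, ∫⁻ τ in Ioc 0 h, D (t + h) (t + τ) ≤ R :=
    lintegral_Ioc_lintegral_Ioc_comp_shift_le hD a h
  have hnear : ∫⁻ t in Ioc 0 a, ∫⁻ τ in Ioc 0 h, D (t + τ) t ≤ R :=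
    lintegral_mono_set (Ioc_subset_Ioc_right (by linarith))
  have hmeas_far : Measurable (uncurry fun t τ => D (t + h) (t + τ)) :=
    hD.comp ((measurable_fst.add_const h).prodMk (measurable_fst.add measurable_snd))
  calc ENNReal.ofReal h * ∫⁻ t in Ioc 0 a, D (t + h) t
      = ∫⁻ t in Ioc 0 a, ∫⁻ τ in Ioc 0 h, D (t + h) t := by
        simp_rw [setLIntegral_const, Real.volume_Ioc, sub_zero, mul_comm _ (ENNReal.ofReal h)]
        exact (lintegral_const_mul' _ _ ENNReal.ofReal_ne_top).symm
    _ ≤ ∫⁻ t in Ioc 0 a, ∫⁻ τ in Ioc 0 h, 2 * (D (t + h) (t + τ) + D (t + τ) t) :=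
        lintegral_mono fun t => lintegral_mono fun τ => edist_sq_le_two_mul_add _ _ _
    _ = 2 * ((∫⁻ t in Ioc 0 a, ∫⁻ τ in Ioc 0 h, D (t + h) (t + τ)) +
          ∫⁻ t in Ioc 0 a, ∫⁻ τ in Ioc 0 h, D (t + τ) t) := by
        have hinner : ∀ t, ∫⁻ τ in Ioc 0 h, 2 * (D (t + h) (t + τ) + D (t + τ) t) =
            2 * ((∫⁻ τ in Ioc 0 h, D (t + h) (t + τ)) + ∫⁻ τ in Ioc 0 h, D (t + τ) t) := by
          intro t
          rw [lintegral_const_mul' _ _ ENNReal.ofNat_ne_top,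
            lintegral_add_left (by exact hmeas_far.comp measurable_prodMk_left)]
        simp_rw [hinner]
        rw [lintegral_const_mul' _ _ ENNReal.ofNat_ne_top,
          lintegral_add_left (by exact hmeas_far.lintegral_prod_right')]
    _ ≤ 2 * (R + R) := by grw [hfar, hnear]
    _ = 4 * R := by ring

theorem intervalIntegral_norm_sub_sq_eq_toReal {E : Type*} [SeminormedAddCommGroup E]
    {u v : ℝ → E} (hu : StronglyMeasurable u) (hv : StronglyMeasurable v) {a b : ℝ}
    (hab : a ≤ b) :
    ∫ x in a..b, ‖u x - v x‖ ^ 2 = (∫⁻ x in Ioc a b, edist (u x) (v x) ^ 2).toReal := by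
  rw [intervalIntegral.integral_of_le hab, integral_eq_lintegral_of_nonneg_ae
    (ae_of_all _ fun _ => by positivity) (by fun_prop)]
  simp_rw [ENNReal.ofReal_pow (norm_nonneg _), ofReal_norm, edist_eq_enorm_sub]

theorem mul_integral_norm_sub_sq_le_of_stronglyMeasurable {E : Type*}
    [SeminormedAddCommGroup E] {β : ℝ → E} (hβ : StronglyMeasurable β) {a h : ℝ} (ha : 0 ≤ a)
    (hh : 0 ≤ h)
    (hβ_sq : ∫⁻ s in Ioc 0 (a + 2 * h), ‖β s‖ₑ ^ 2 ≠ ∞) :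
    h * ∫ t in 0..a, ‖β (t + h) - β t‖ ^ 2 ≤
      4 * ∫ t in 0..(a + h), ∫ τ in 0..h, ‖β (t + τ) - β t‖ ^ 2 := by
  set φ := fun t => ∫⁻ τ in Ioc 0 h, edist (β (t + τ)) (β t) ^ 2
  have hφ : Measurable φ := by
    exact ((hβ.comp_measurable measurable_add).edist
      (hβ.comp_measurable measurable_fst)).measurable.pow_const 2 |>.lintegral_prod_right'
  have hφ_fin : ∫⁻ t in Ioc 0 (a + h), φ t ≠ ∞ :=
    lintegral_Ioc_lintegral_Ioc_edist_sq_ne_top hβ hh (by rwa [add_assoc, ← two_mul])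
  have hleft : ∫ t in 0..a, ‖β (t + h) - β t‖ ^ 2 =
      (∫⁻ t in Ioc 0 a, edist (β (t + h)) (β t) ^ 2).toReal :=
    intervalIntegral_norm_sub_sq_eq_toReal (hβ.comp_measurable (measurable_add_const h)) hβ ha
  have hright : ∫ t in 0..(a + h), ∫ τ in 0..h, ‖β (t + τ) - β t‖ ^ 2 =
      (∫⁻ t in Ioc 0 (a + h), φ t).toReal := by
    rw [intervalIntegral.integral_of_le (by linarith), ← integral_toReal hφ.aemeasurable
      (ae_lt_top hφ hφ_fin)]
    exact integral_congr_ae (ae_of_all _ fun t => intervalIntegral_norm_sub_sq_eq_toReal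
      (hβ.comp_measurable (measurable_const_add t)) stronglyMeasurable_const hh)
  have hmain := ENNReal.toReal_mono (by finiteness) (ofReal_mul_lintegral_edist_sq_le hβ a hh)
  rwa [ENNReal.toReal_mul, ENNReal.toReal_mul, ENNReal.toReal_ofReal hh, ENNReal.toReal_ofNat,
    ← hleft, ← hright] at hmain

theorem mul_integral_norm_sub_sq_le {E : Type*} [SeminormedAddCommGroup E]
    {β : ℝ → E} (hβ : AEStronglyMeasurable β volume) {a h : ℝ} (ha : 0 ≤ a) (hh : 0 ≤ h)
    (hβ_sq : IntegrableOn (fun t => ‖β t‖ ^ 2) (Ioc 0 (a + 2 * h))) :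
    h * ∫ t in 0..a, ‖β (t + h) - β t‖ ^ 2 ≤
      4 * ∫ t in 0..(a + h), ∫ τ in 0..h, ‖β (t + τ) - β t‖ ^ 2 := by
  have hβ_ae : β =ᵐ[volume] hβ.mk β := hβ.ae_eq_mk
  have hβ_sq' : ∫⁻ s in Ioc 0 (a + 2 * h), ‖hβ.mk β s‖ₑ ^ 2 ≠ ∞ := by
    have hfin := hβ_sq.hasFiniteIntegral
    simp only [HasFiniteIntegral, enorm_pow, enorm_norm] at hfin
    have hβ_sq_ae : (fun s => ‖β s‖ₑ ^ 2) =ᵐ[volume] fun s => ‖hβ.mk β s‖ₑ ^ 2 :=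
      hβ_ae.mono fun s hs => by simp only [hs]
    rw [← lintegral_congr_ae (ae_restrict_of_ae hβ_sq_ae)]
    exact hfin.ne
  convert mul_integral_norm_sub_sq_le_of_stronglyMeasurable hβ.stronglyMeasurable_mk ha hh
    hβ_sq' using 2
  · refine intervalIntegral.integral_congr_ae ?_
    filter_upwards [(quasiMeasurePreserving_add_right volume h).ae_eq_comp hβ_ae, hβ_ae]
      with t hth ht _
    simp only [comp_apply] at hth
    rw [hth, ht]
  · refine intervalIntegral.integral_congr_ae ?_
    filter_upwards [hβ_ae] with t ht _
    refine intervalIntegral.integral_congr_ae ?_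
    filter_upwards [(quasiMeasurePreserving_add_left volume t).ae_eq_comp hβ_ae] with τ hτ _
    simp only [comp_apply] at hτ
    rw [hτ, ht]

theorem stmt5_general (H : Type*) [NormedAddCommGroup H]
    (T h : ℝ) (hh : 0 < h) (hh2 : h < T/2)
    (β : ℝ → H) (hmeas : AEStronglyMeasurable β volume)
    (hL2 : IntegrableOn (fun t => ‖β t‖^2) (Set.Ioc 0 T)) :
    h⁻¹ * ∫ t in (0:ℝ)..(T - 2*h), ‖β (t+h) - β t‖^2 ≤
      4 * (h^2)⁻¹ * ∫ t in (0:ℝ)..(T-h), ∫ τ in (0:ℝ)..h, ‖β (t+τ) - β t‖^2 := by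
  have hmain := mul_integral_norm_sub_sq_le hmeas (a := T - 2 * h) (by linarith) hh.le
    (by rwa [sub_add_cancel])
  rw [show T - 2 * h + h = T - h by ring] at hmain
  rw [show h⁻¹ = (h ^ 2)⁻¹ * h by field_simp, mul_assoc, mul_comm 4, mul_assoc]
  exact mul_le_mul_of_nonneg_left hmain (by positivity)

theorem stmt5 (H : Type*) [NormedAddCommGroup H] [InnerProductSpace ℝ H]
    (T h : ℝ) (hT : 0 < T) (hh : 0 < h) (hh2 : h < T/2)
    (β : ℝ → H) (hmeas : AEStronglyMeasurable β volume)
    (hL2 : IntegrableOn (fun t => ‖β t‖^2) (Set.Ioc 0 T)) :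
    h⁻¹ * ∫ t in (0:ℝ)..(T - 2*h), ‖β (t+h) - β t‖^2 ≤
      4 * (h^2)⁻¹ * ∫ t in (0:ℝ)..(T-h), ∫ τ in (0:ℝ)..h, ‖β (t+τ) - β t‖^2 :=
  stmt5_general H T h hh hh2 β hmeas hL2
end

section
/- Let d ≥ 2, p ∈ (2, 2(d-1)/(d-2)) (with p ∈ (2,∞) if d = 2), and define β := (p-2) / (4(d-1) - 2p(d-2)) and λ := 1/(2β(d-1)+1). Then λ ∈ (0,1), and the fractional Sobolev embeddings W^{λβ,2}(0,1) ↪ L^p(0,1) and W^{(1-λ)/2,2}(B) ↪ L^p(B) hold, where B = (-1,1)^{d-1}. -/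
/-!
The embedding holds on any set `Ω` of finite measure in a metric measure space with the lower
bound `μ (ball x r ∩ Ω) ≥ c₀ r ^ ν`, at the critical exponent `s / ν = 1 / 2 - 1 / p`. Let
`a j = μ (Ω ∩ {g ≥ 2 ^ j})`. Choosing `r` with `c₀ r ^ ν = 2 a j`, every point of
`{g ≥ 2 ^ (j + 1)}` sees mass `a j` of `{g < 2 ^ j}` within distance `r`, so
`a (j + 1) * a j * r ^ (-(ν + 2 s))` is bounded by the kernel integral `D j` over
`{g ≥ 2 ^ (j + 1)} × {g < 2 ^ j}`, while `∑ 4 ^ j D j` is bounded by the Gagliardo energy.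
For `T j = 2 ^ (j p) a j` this reads `T (j + 1) ≲ T j ^ κ * 4 ^ j D j` with `κ = 1 - 2 / p`,
except where `a j` is large, which the `L²` bound confines to small `j`. Hence
`∑ T ≲ 1 + (∑ T) ^ κ`, and `κ < 1` bounds `∑ T ≈ ∫ g ^ p`; homogeneity gives the general
inequality. The interval and the cube are lower regular with `ν = 1` and `ν = d - 1`, for which
`λβ` and `(1 - λ) / 2` are exactly critical.
-/

open MeasureTheory Set
open scoped ENNReal

namespace FractionalSobolev

noncomputable def dyadicPowSum (q t : ℝ) : ℝ≥0∞ :=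
  ∑' j : ℤ, if (2:ℝ) ^ j ≤ t then ENNReal.ofReal (((2:ℝ) ^ j) ^ q) else 0

lemma two_zpow_rpow_sub (N : ℤ) (k : ℕ) (q : ℝ) :
    ((2:ℝ) ^ (N - k)) ^ q = ((2:ℝ) ^ N) ^ q * ((2:ℝ) ^ (-q)) ^ k := by
  simp only [← Real.rpow_intCast, ← Real.rpow_natCast, ← Real.rpow_mul zero_le_two,
    ← Real.rpow_add two_pos]
  push_cast
  ring_nf

lemma dyadicPowSum_le {q : ℝ} (hq : 0 < q) (t : ℝ) :
    dyadicPowSum q t ≤ ENNReal.ofReal ((1 - 2 ^ (-q))⁻¹ * t ^ q) := by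
  rcases le_or_gt t 0 with ht | ht
  · have hzero : ∀ j : ℤ, ¬ (2:ℝ) ^ j ≤ t := fun j h => (zpow_pos two_pos j).not_ge (h.trans ht)
    simp [dyadicPowSum, hzero]
  set N := Int.log 2 t
  have hr : (2:ℝ) ^ (-q) < 1 := Real.rpow_lt_one_of_one_lt_of_neg one_lt_two (by linarith)
  have hsupp : (Function.support fun j : ℤ =>
      if (2:ℝ) ^ j ≤ t then ENNReal.ofReal (((2:ℝ) ^ j) ^ q) else 0) ⊆
      range fun k : ℕ => N - k := by
    intro j hj
    have hjN : j ≤ N := (Int.zpow_le_iff_le_log one_lt_two ht).1 (by_contra fun h => hj (if_neg h))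
    exact ⟨(N - j).toNat, show N - ((N - j).toNat : ℤ) = j by omega⟩
  have hinj : Function.Injective fun k : ℕ => N - k := fun a b h => by simpa using h
  calc dyadicPowSum q t
      = ∑' k : ℕ, if (2:ℝ) ^ (N - k) ≤ t then ENNReal.ofReal (((2:ℝ) ^ (N - k)) ^ q) else 0 :=
        (hinj.tsum_eq hsupp).symm
    _ ≤ ∑' k : ℕ, ENNReal.ofReal (((2:ℝ) ^ N) ^ q) * ENNReal.ofReal ((2:ℝ) ^ (-q)) ^ k := by
        refine ENNReal.tsum_le_tsum fun k => ?_
        split_ifs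
        · rw [two_zpow_rpow_sub, ENNReal.ofReal_mul (by positivity),
            ENNReal.ofReal_pow (by positivity)]
        · exact zero_le
    _ = ENNReal.ofReal (((2:ℝ) ^ N) ^ q) * ENNReal.ofReal (1 - 2 ^ (-q))⁻¹ := by
        rw [ENNReal.tsum_mul_left, ENNReal.tsum_geometric, ENNReal.ofReal_inv_of_pos (by linarith),
          ENNReal.ofReal_sub _ (by positivity), ENNReal.ofReal_one]
    _ ≤ ENNReal.ofReal (t ^ q) * ENNReal.ofReal (1 - 2 ^ (-q))⁻¹ := by
        gcongr
        exact Int.zpow_log_le_self one_lt_two ht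
    _ = ENNReal.ofReal ((1 - 2 ^ (-q))⁻¹ * t ^ q) := by
        rw [mul_comm, ENNReal.ofReal_mul (inv_nonneg.2 (by linarith))]

lemma ofReal_rpow_le_dyadicPowSum {q t : ℝ} (hq : 0 < q) (ht : 0 ≤ t) :
    ENNReal.ofReal (t ^ q) ≤ ENNReal.ofReal (2 ^ q) * dyadicPowSum q t := by
  rcases ht.eq_or_lt with rfl | ht
  · simp [Real.zero_rpow hq.ne']
  set N := Int.log 2 t
  have hN : (2:ℝ) ^ N ≤ t := Int.zpow_log_le_self one_lt_two ht
  calc ENNReal.ofReal (t ^ q) ≤ ENNReal.ofReal ((2 * 2 ^ N) ^ q) := by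
        gcongr
        simpa [zpow_add_one₀, mul_comm] using (Int.lt_zpow_succ_log_self one_lt_two t).le
    _ = ENNReal.ofReal (2 ^ q) * ENNReal.ofReal (((2:ℝ) ^ N) ^ q) := by
        rw [Real.mul_rpow zero_le_two (by positivity), ENNReal.ofReal_mul (by positivity)]
    _ ≤ ENNReal.ofReal (2 ^ q) * dyadicPowSum q t := by
        gcongr
        refine le_of_eq_of_le ?_ (ENNReal.le_tsum N)
        rw [if_pos hN]

lemma le_max_of_le_add_mul_rpow {x a b : ℝ≥0∞} {κ : ℝ} (hκ : κ < 1) (hx : x ≠ ⊤)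
    (h : x ≤ a + b * x ^ κ) : x ≤ max (2 * a) ((2 * b) ^ (1 - κ)⁻¹) := by
  rcases le_total (b * x ^ κ) a with hba | hab
  · exact le_max_of_le_left (by rw [two_mul]; exact h.trans (by gcongr))
  rcases eq_or_ne x 0 with rfl | hx0
  · exact zero_le
  have hxκ0 : x ^ κ ≠ 0 := (ENNReal.rpow_pos (pos_iff_ne_zero.2 hx0) hx).ne'
  have hxκ : x ^ κ ≠ ⊤ := ENNReal.rpow_ne_top_of_ne_zero hx0 hx
  have hsplit : x = x ^ (1 - κ) * x ^ κ := by
    rw [← ENNReal.rpow_add _ _ hx0 hx, sub_add_cancel, ENNReal.rpow_one]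
  have hpow : x ^ (1 - κ) ≤ 2 * b := by
    rw [← ENNReal.mul_le_mul_iff_left hxκ0 hxκ, ← hsplit, mul_assoc, two_mul]
    exact h.trans (by gcongr)
  refine le_max_of_le_right ?_
  calc x = (x ^ (1 - κ)) ^ (1 - κ)⁻¹ := (ENNReal.rpow_rpow_inv (by linarith) x).symm
    _ ≤ (2 * b) ^ (1 - κ)⁻¹ := ENNReal.rpow_le_rpow hpow (inv_nonneg.2 (by linarith))

lemma tsum_le_of_le_add_mul_rpow {T u v : ℤ → ℝ≥0∞} {K : ℝ≥0∞} {κ : ℝ} (hκ0 : 0 ≤ κ)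
    (hκ1 : κ < 1) (hT : ∀ j, T j ≠ ⊤) (hbase : ∀ j ≤ 0, T j ≤ u j)
    (hrec : ∀ j, T (j + 1) ≤ u (j + 1) + K * T j ^ κ * v j) :
    ∑' j, T j ≤ max (2 * ∑' j, u j) ((2 * (K * ∑' j, v j)) ^ (1 - κ)⁻¹) := by
  -- On a finite window the partial sum is finite, so `le_max_of_le_add_mul_rpow` applies.
  have hwindow : ∀ N : ℕ, ∑ j ∈ Finset.Icc (-N : ℤ) N, T j ≤
      max (2 * ∑' j, u j) ((2 * (K * ∑' j, v j)) ^ (1 - κ)⁻¹) := by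
    intro N
    set S := ∑ j ∈ Finset.Icc (-N : ℤ) N, T j
    have hterm : ∀ j ∈ Finset.Icc (-N : ℤ) N, T j ≤ u j + K * S ^ κ * v (j - 1) := by
      intro j hj
      obtain ⟨hlo, hhi⟩ := Finset.mem_Icc.1 hj
      rcases hlo.eq_or_lt with rfl | hlt
      · exact le_add_right (hbase _ (by omega))
      · have hprev : T (j - 1) ≤ S :=
          Finset.single_le_sum (fun _ _ => zero_le) (Finset.mem_Icc.2 (by omega))
        calc T j = T (j - 1 + 1) := by rw [sub_add_cancel]
          _ ≤ u j + K * T (j - 1) ^ κ * v (j - 1) := by simpa using hrec (j - 1)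
          _ ≤ u j + K * S ^ κ * v (j - 1) := by gcongr
    have hshift : ∑ j ∈ Finset.Icc (-N : ℤ) N, v (j - 1) ≤ ∑' j, v j :=
      (ENNReal.sum_le_tsum _).trans_eq ((Equiv.subRight (1 : ℤ)).tsum_eq v)
    refine le_max_of_le_add_mul_rpow hκ1 (ENNReal.sum_ne_top.2 fun j _ => hT j) ?_
    calc S ≤ ∑ j ∈ Finset.Icc (-N : ℤ) N, (u j + K * S ^ κ * v (j - 1)) :=
          Finset.sum_le_sum hterm
      _ = ∑ j ∈ Finset.Icc (-N : ℤ) N, u j +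
            K * S ^ κ * ∑ j ∈ Finset.Icc (-N : ℤ) N, v (j - 1) := by
          rw [Finset.sum_add_distrib, Finset.mul_sum]
      _ ≤ ∑' j, u j + K * S ^ κ * ∑' j, v j := by gcongr; exact ENNReal.sum_le_tsum _
      _ = ∑' j, u j + K * (∑' j, v j) * S ^ κ := by ring
  rw [ENNReal.tsum_eq_iSup_sum]
  refine iSup_le fun s => le_trans (Finset.sum_le_sum_of_subset fun j hj => ?_)
    (hwindow (s.sup Int.natAbs))
  have := Finset.le_sup (f := Int.natAbs) hj
  exact Finset.mem_Icc.2 (by omega)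

lemma tsum_dyadic_gap_le (a b : ℝ) :
    ∑' j : ℤ, (if (2:ℝ) ^ (j + 1) ≤ a ∧ b < 2 ^ j then ENNReal.ofReal (((2:ℝ) ^ j) ^ (2:ℝ)) else 0)
      ≤ ENNReal.ofReal (4 / 3 * (a - b) ^ 2) := by
  have hconst : (1 - (2:ℝ) ^ (-2:ℝ))⁻¹ = 4 / 3 := by
    rw [Real.rpow_neg zero_le_two, Real.rpow_two]; norm_num
  calc _ ≤ dyadicPowSum 2 (a - b) := by
        refine ENNReal.tsum_le_tsum fun j => ?_
        split_ifs with hgap hle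
        · exact le_rfl
        · exact absurd (by rw [zpow_add_one₀ two_ne_zero] at hgap; linarith) hle
        · exact zero_le
        · exact le_rfl
    _ ≤ ENNReal.ofReal (4 / 3 * (a - b) ^ 2) := by
        simpa only [hconst, Real.rpow_two] using dyadicPowSum_le two_pos (a - b)

def IsLowerAhlforsRegular {X : Type*} [MeasurableSpace X] [MetricSpace X] (μ : Measure X)
    (Ω : Set X) (ν c₀ R₀ : ℝ) : Prop :=
  ∀ x ∈ Ω, ∀ r, 0 < r → r ≤ R₀ → ENNReal.ofReal (c₀ * r ^ ν) ≤ μ (Metric.ball x r ∩ Ω)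

section LevelSets

variable {X : Type*} [MeasurableSpace X] {μ : Measure X} {Ω : Set X} {g : X → ℝ}

def dyadicLevelMeasure (μ : Measure X) (Ω : Set X) (g : X → ℝ) (j : ℤ) : ℝ≥0∞ :=
  μ (Ω ∩ {x | (2:ℝ) ^ j ≤ g x})

noncomputable def dyadicInteraction [MetricSpace X] (μ : Measure X) (Ω : Set X) (g : X → ℝ)
    (e : ℝ) (j : ℤ) : ℝ≥0∞ :=
  ∫⁻ q in (Ω ∩ {x | (2:ℝ) ^ (j + 1) ≤ g x}) ×ˢ (Ω ∩ {x | g x < (2:ℝ) ^ j}),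
    ENNReal.ofReal (dist q.1 q.2 ^ (-e)) ∂μ.prod μ

noncomputable def gagliardoEnergy [MetricSpace X] (μ : Measure X) (Ω : Set X) (e : ℝ)
    (g : X → ℝ) : ℝ≥0∞ :=
  ∫⁻ q in Ω ×ˢ Ω, ENNReal.ofReal ((g q.1 - g q.2) ^ 2 / dist q.1 q.2 ^ e) ∂μ.prod μ

lemma dyadicLevelMeasure_antitone : Antitone (dyadicLevelMeasure μ Ω g) := fun _ _ hij =>
  measure_mono (inter_subset_inter_right _ fun _ hx =>
    (zpow_le_zpow_right₀ one_le_two hij).trans (mem_ofPred_eq ▸ hx))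

lemma dyadicLevelMeasure_le (j : ℤ) : dyadicLevelMeasure μ Ω g j ≤ μ Ω :=
  measure_mono inter_subset_left

lemma ofReal_sq_mul_dyadicLevelMeasure_le (hg : Measurable g) (j : ℤ) :
    ENNReal.ofReal (((2:ℝ) ^ j) ^ 2) * dyadicLevelMeasure μ Ω g j ≤
      ∫⁻ x in Ω, ENNReal.ofReal (g x ^ 2) ∂μ :=
  calc _ = ∫⁻ _ in Ω ∩ {x | (2:ℝ) ^ j ≤ g x}, ENNReal.ofReal (((2:ℝ) ^ j) ^ 2) ∂μ :=
        (setLIntegral_const _ _).symm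
    _ ≤ ∫⁻ x in Ω ∩ {x | (2:ℝ) ^ j ≤ g x}, ENNReal.ofReal (g x ^ 2) ∂μ :=
        setLIntegral_mono (hg.pow_const 2).ennreal_ofReal fun x hx =>
          ENNReal.ofReal_le_ofReal (pow_le_pow_left₀ (by positivity) hx.2 2)
    _ ≤ _ := lintegral_mono_set inter_subset_left

lemma lintegral_dyadicPowSum (hg : Measurable g) (q : ℝ) :
    ∫⁻ x in Ω, dyadicPowSum q (g x) ∂μ =
      ∑' j : ℤ, ENNReal.ofReal (((2:ℝ) ^ j) ^ q) * dyadicLevelMeasure μ Ω g j := by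
  have hlevel : ∀ j : ℤ, MeasurableSet {x | (2:ℝ) ^ j ≤ g x} :=
    fun j => measurableSet_le measurable_const hg
  simp only [dyadicPowSum]
  rw [lintegral_tsum fun j =>
    (Measurable.ite (hlevel j) measurable_const measurable_const).aemeasurable]
  refine tsum_congr fun j => ?_
  have hind : (fun x => if (2:ℝ) ^ j ≤ g x then ENNReal.ofReal (((2:ℝ) ^ j) ^ q) else 0) =
      {x | (2:ℝ) ^ j ≤ g x}.indicator fun _ => ENNReal.ofReal (((2:ℝ) ^ j) ^ q) := by
    ext x; simp [indicator_apply]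
  rw [hind, lintegral_indicator_const (hlevel j), Measure.restrict_apply (hlevel j), inter_comm,
    dyadicLevelMeasure]

end LevelSets

section MetricMeasure

variable {X : Type*} [MetricSpace X] [MeasurableSpace X] [OpensMeasurableSpace X]
  [SecondCountableTopology X] {μ : Measure X} {Ω : Set X} {g : X → ℝ}

lemma mul_measure_le_lintegral_dist_rpow_neg [SFinite μ] {A B : Set X} (hB : MeasurableSet B)
    (hAB : Disjoint A B) {r e : ℝ} (he : 0 ≤ e) {m : ℝ≥0∞}
    (hm : ∀ x ∈ A, m ≤ μ (B ∩ Metric.ball x r)) :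
    ENNReal.ofReal (r ^ (-e)) * m * μ A ≤
      ∫⁻ q in A ×ˢ B, ENNReal.ofReal (dist q.1 q.2 ^ (-e)) ∂μ.prod μ := by
  have hker : Measurable fun q : X × X => ENNReal.ofReal (dist q.1 q.2 ^ (-e)) :=
    (measurable_dist.pow_const _).ennreal_ofReal
  rw [← Measure.prod_restrict, lintegral_prod _ hker.aemeasurable, ← setLIntegral_const]
  refine setLIntegral_mono hker.lintegral_prod_right' fun x hx => ?_
  have hclose : ∀ y ∈ B ∩ Metric.ball x r,
      ENNReal.ofReal (r ^ (-e)) ≤ ENNReal.ofReal (dist x y ^ (-e)) := fun y hy =>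
    ENNReal.ofReal_le_ofReal <| Real.rpow_le_rpow_of_nonpos
      (dist_pos.2 fun h => hAB.ne_of_mem hx hy.1 h)
      (dist_comm x y ▸ (Metric.mem_ball.1 hy.2).le) (neg_nonpos.2 he)
  calc ENNReal.ofReal (r ^ (-e)) * m ≤ ENNReal.ofReal (r ^ (-e)) * μ (B ∩ Metric.ball x r) := by
        gcongr; exact hm x hx
    _ = ∫⁻ _ in B ∩ Metric.ball x r, ENNReal.ofReal (r ^ (-e)) ∂μ := (setLIntegral_const _ _).symm
    _ ≤ ∫⁻ y in B ∩ Metric.ball x r, ENNReal.ofReal (dist x y ^ (-e)) ∂μ :=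
        setLIntegral_mono' (hB.inter Metric.isOpen_ball.measurableSet) hclose
    _ ≤ ∫⁻ y in B, ENNReal.ofReal (dist x y ^ (-e)) ∂μ := lintegral_mono_set inter_subset_left

lemma dyadicLevelMeasure_succ_le [SFinite μ] (hΩ : MeasurableSet Ω) (hg : Measurable g)
    {ν c₀ R₀ κ : ℝ} (hν : 0 < ν) (hc₀ : 0 < c₀) (hR₀ : 0 ≤ R₀) (hκ : 0 ≤ κ)
    (hreg : IsLowerAhlforsRegular μ Ω ν c₀ R₀) {j : ℤ} (ha0 : dyadicLevelMeasure μ Ω g j ≠ 0)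
    (hasmall : dyadicLevelMeasure μ Ω g j ≤ ENNReal.ofReal (c₀ * R₀ ^ ν / 2)) :
    dyadicLevelMeasure μ Ω g (j + 1) ≤ ENNReal.ofReal ((2 / c₀) ^ (1 + κ)) *
      dyadicLevelMeasure μ Ω g j ^ κ * dyadicInteraction μ Ω g (ν * (1 + κ)) j := by
  set a := dyadicLevelMeasure μ Ω g j
  set e := ν * (1 + κ)
  have hatop : a ≠ ⊤ := ne_top_of_le_ne_top ENNReal.ofReal_ne_top hasmall
  set α := a.toReal
  have hα : 0 < α := ENNReal.toReal_pos ha0 hatop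
  -- With `c₀ r ^ ν = 2 a`, at least half of `ball x r ∩ Ω` lies outside `{2 ^ j ≤ g}`.
  set r := (2 * α / c₀) ^ ν⁻¹
  have hr : 0 < r := by positivity
  have hrν : c₀ * r ^ ν = 2 * α := by
    rw [← Real.rpow_mul (by positivity), inv_mul_cancel₀ hν.ne', Real.rpow_one]
    field_simp
  have hrR₀ : r ≤ R₀ := by
    have hαR : α ≤ c₀ * R₀ ^ ν / 2 := by
      have := ENNReal.toReal_mono ENNReal.ofReal_ne_top hasmall
      rwa [ENNReal.toReal_ofReal (by positivity)] at this
    calc r ≤ (R₀ ^ ν) ^ ν⁻¹ :=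
          Real.rpow_le_rpow (by positivity) (by rw [div_le_iff₀ hc₀]; linarith) (by positivity)
      _ = R₀ := by rw [← Real.rpow_mul hR₀, mul_inv_cancel₀ hν.ne', Real.rpow_one]
  have hball : ∀ x ∈ Ω ∩ {x | (2:ℝ) ^ (j + 1) ≤ g x},
      a ≤ μ ((Ω ∩ {x | g x < (2:ℝ) ^ j}) ∩ Metric.ball x r) := by
    intro x hx
    refine ENNReal.le_of_add_le_add_right hatop ?_
    have hcover : Metric.ball x r ∩ Ω ⊆
        (Ω ∩ {x | g x < (2:ℝ) ^ j}) ∩ Metric.ball x r ∪ Ω ∩ {x | (2:ℝ) ^ j ≤ g x} := by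
      rintro y ⟨hyr, hyΩ⟩
      rcases lt_or_ge (g y) (2 ^ j) with hy | hy
      exacts [Or.inl ⟨⟨hyΩ, hy⟩, hyr⟩, Or.inr ⟨hyΩ, hy⟩]
    calc a + a = ENNReal.ofReal (c₀ * r ^ ν) := by
          rw [hrν, ENNReal.ofReal_mul zero_le_two, ENNReal.ofReal_toReal hatop,
            ENNReal.ofReal_ofNat, two_mul]
      _ ≤ μ (Metric.ball x r ∩ Ω) := hreg x hx.1 r hr hrR₀
      _ ≤ _ := (measure_mono hcover).trans (measure_union_le _ _)
  have hdisj : Disjoint (Ω ∩ {x | (2:ℝ) ^ (j + 1) ≤ g x}) (Ω ∩ {x | g x < (2:ℝ) ^ j}) := by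
    rw [disjoint_left]
    rintro x ⟨-, hx1⟩ ⟨-, hx2⟩
    have := zpow_lt_zpow_right₀ (one_lt_two : (1:ℝ) < 2) (lt_add_one j)
    simp only [mem_ofPred_eq] at hx1 hx2
    linarith
  have hD := mul_measure_le_lintegral_dist_rpow_neg
    (e := e) (hΩ.inter (measurableSet_lt hg measurable_const)) hdisj (by positivity) hball
  have hre : ENNReal.ofReal (r ^ e) = ENNReal.ofReal ((2 / c₀) ^ (1 + κ)) * a ^ κ * a := by
    have hreal : r ^ e = (2 / c₀) ^ (1 + κ) * α ^ κ * α := by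
      rw [← Real.rpow_mul (by positivity), ← mul_assoc, inv_mul_cancel₀ hν.ne', one_mul,
        mul_div_right_comm, Real.mul_rpow (by positivity) hα.le, Real.rpow_add hα,
        Real.rpow_one]
      ring
    rw [hreal, ENNReal.ofReal_mul (by positivity), ENNReal.ofReal_mul (by positivity),
      ← ENNReal.ofReal_rpow_of_nonneg hα.le hκ, ENNReal.ofReal_toReal hatop]
  have hinv : ENNReal.ofReal (r ^ e) * ENNReal.ofReal (r ^ (-e)) = 1 := by
    rw [← ENNReal.ofReal_mul (by positivity), ← Real.rpow_add hr, add_neg_cancel,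
      Real.rpow_zero, ENNReal.ofReal_one]
  rw [← ENNReal.mul_le_mul_iff_left ha0 hatop]
  calc dyadicLevelMeasure μ Ω g (j + 1) * a
      = ENNReal.ofReal (r ^ e) *
          (ENNReal.ofReal (r ^ (-e)) * a * μ (Ω ∩ {x | (2:ℝ) ^ (j + 1) ≤ g x})) := by
        rw [← mul_assoc, ← mul_assoc, hinv, one_mul, mul_comm, dyadicLevelMeasure]
    _ ≤ ENNReal.ofReal (r ^ e) * dyadicInteraction μ Ω g e j := by gcongr; exact hD
    _ = _ := by rw [hre]; ring

lemma measurable_gagliardo_integrand (hg : Measurable g) (e : ℝ) :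
    Measurable fun q : X × X => ENNReal.ofReal ((g q.1 - g q.2) ^ 2 / dist q.1 q.2 ^ e) := by
  fun_prop

lemma tsum_mul_dyadicInteraction_le (hg : Measurable g) (e : ℝ) :
    ∑' j : ℤ, ENNReal.ofReal (((2:ℝ) ^ j) ^ (2:ℝ)) * dyadicInteraction μ Ω g e j ≤
      ENNReal.ofReal (4 / 3) * gagliardoEnergy μ Ω e g := by
  set k : X × X → ℝ≥0∞ := fun q => ENNReal.ofReal (dist q.1 q.2 ^ (-e))
  have hk : Measurable k := (measurable_dist.pow_const _).ennreal_ofReal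
  set c : ℤ → ℝ≥0∞ := fun j => ENNReal.ofReal (((2:ℝ) ^ j) ^ (2:ℝ))
  set Q : ℤ → Set (X × X) := fun j => {q | (2:ℝ) ^ (j + 1) ≤ g q.1 ∧ g q.2 < 2 ^ j}
  have hQ : ∀ j, MeasurableSet (Q j) := fun j =>
    (measurableSet_le measurable_const (hg.comp measurable_fst)).inter
      (measurableSet_lt (hg.comp measurable_snd) measurable_const)
  have hterm : ∀ j, c j * dyadicInteraction μ Ω g e j =
      ∫⁻ q in Ω ×ˢ Ω, (Q j).indicator (fun q => c j * k q) q ∂μ.prod μ := by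
    intro j
    have hset : (Ω ∩ {x | (2:ℝ) ^ (j + 1) ≤ g x}) ×ˢ (Ω ∩ {x | g x < (2:ℝ) ^ j}) =
        Q j ∩ Ω ×ˢ Ω := by
      ext q; simp only [Q, mem_prod, mem_inter_iff, mem_ofPred_eq]; tauto
    rw [lintegral_indicator (hQ j), Measure.restrict_restrict (hQ j), ← hset,
      lintegral_const_mul _ hk, dyadicInteraction]
  have hpt : ∀ q : X × X, ∑' j, (Q j).indicator (fun q => c j * k q) q ≤
      ENNReal.ofReal (4 / 3) * ENNReal.ofReal ((g q.1 - g q.2) ^ 2 / dist q.1 q.2 ^ e) := by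
    intro q
    calc ∑' j, (Q j).indicator (fun q => c j * k q) q
        = (∑' j : ℤ, if (2:ℝ) ^ (j + 1) ≤ g q.1 ∧ g q.2 < 2 ^ j then c j else 0) * k q := by
          rw [← ENNReal.tsum_mul_right]
          refine tsum_congr fun j => ?_
          by_cases hq : q ∈ Q j
          · rw [indicator_of_mem hq, if_pos (show _ ∧ _ from hq)]
          · rw [indicator_of_notMem hq, if_neg (show ¬(_ ∧ _) from hq), zero_mul]
      _ ≤ ENNReal.ofReal (4 / 3 * (g q.1 - g q.2) ^ 2) * k q := by
          gcongr; exact tsum_dyadic_gap_le _ _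
      _ = _ := by
          rw [← ENNReal.ofReal_mul (by positivity), ← ENNReal.ofReal_mul (by positivity),
            Real.rpow_neg dist_nonneg]
          ring_nf
  calc ∑' j : ℤ, c j * dyadicInteraction μ Ω g e j
      = ∑' j, ∫⁻ q in Ω ×ˢ Ω, (Q j).indicator (fun q => c j * k q) q ∂μ.prod μ :=
        tsum_congr hterm
    _ = ∫⁻ q in Ω ×ˢ Ω, ∑' j, (Q j).indicator (fun q => c j * k q) q ∂μ.prod μ :=
        (lintegral_tsum fun j => ((hk.const_mul _).indicator (hQ j)).aemeasurable).symm
    _ ≤ ∫⁻ q in Ω ×ˢ Ω, ENNReal.ofReal (4 / 3) *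
          ENNReal.ofReal ((g q.1 - g q.2) ^ 2 / dist q.1 q.2 ^ e) ∂μ.prod μ :=
        lintegral_mono hpt
    _ = ENNReal.ofReal (4 / 3) * gagliardoEnergy μ Ω e g :=
        lintegral_const_mul _ (measurable_gagliardo_integrand hg e)

lemma rpow_mul_dyadicLevelMeasure_succ_le [SFinite μ] (hΩ : MeasurableSet Ω) (hg : Measurable g)
    {ν p κ c₀ R₀ : ℝ} (hν : 0 < ν) (hp : 2 ≤ p) (hκ : κ = 1 - 2 / p) (hc₀ : 0 < c₀)
    (hR₀ : 0 < R₀) (hreg : IsLowerAhlforsRegular μ Ω ν c₀ R₀)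
    (hg2 : ∫⁻ x in Ω, ENNReal.ofReal (g x ^ 2) ∂μ ≤ 1) (j : ℤ) :
    ENNReal.ofReal (((2:ℝ) ^ (j + 1)) ^ p) * dyadicLevelMeasure μ Ω g (j + 1) ≤
      (if (2:ℝ) ^ (j + 1) ≤ max 1 (2 * √(2 / (c₀ * R₀ ^ ν)))
        then ENNReal.ofReal (((2:ℝ) ^ (j + 1)) ^ p) else 0) * μ Ω +
      ENNReal.ofReal (2 ^ p * (2 / c₀) ^ (1 + κ)) *
        (ENNReal.ofReal (((2:ℝ) ^ j) ^ p) * dyadicLevelMeasure μ Ω g j) ^ κ *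
        (ENNReal.ofReal (((2:ℝ) ^ j) ^ (2:ℝ)) * dyadicInteraction μ Ω g (ν * (1 + κ)) j) := by
  have hκ0 : 0 ≤ κ := by rw [hκ, sub_nonneg, div_le_one (by linarith)]; exact hp
  set a := dyadicLevelMeasure μ Ω g
  rcases eq_or_ne (a j) 0 with h0 | h0
  · have : a (j + 1) = 0 :=
      le_antisymm ((dyadicLevelMeasure_antitone (lt_add_one j).le).trans h0.le) zero_le
    rw [this, mul_zero]
    exact zero_le
  rcases le_or_gt (a j) (ENNReal.ofReal (c₀ * R₀ ^ ν / 2)) with hsmall | hlarge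
  · have hw : ENNReal.ofReal (((2:ℝ) ^ (j + 1)) ^ p) = ENNReal.ofReal (2 ^ p) *
        ENNReal.ofReal (((2:ℝ) ^ j) ^ p) ^ κ * ENNReal.ofReal (((2:ℝ) ^ j) ^ (2:ℝ)) := by
      have hpκ : p * κ + 2 = p := by rw [hκ]; field_simp; ring
      rw [ENNReal.ofReal_rpow_of_nonneg (by positivity) hκ0, ← ENNReal.ofReal_mul (by positivity),
        ← ENNReal.ofReal_mul (by positivity), ← Real.rpow_mul (by positivity),
        mul_assoc, ← Real.rpow_add (by positivity), hpκ, zpow_add_one₀ two_ne_zero,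
        Real.mul_rpow (by positivity) zero_le_two, mul_comm]
    refine le_add_left ?_
    calc ENNReal.ofReal (((2:ℝ) ^ (j + 1)) ^ p) * a (j + 1)
        ≤ ENNReal.ofReal (((2:ℝ) ^ (j + 1)) ^ p) * (ENNReal.ofReal ((2 / c₀) ^ (1 + κ)) *
            a j ^ κ * dyadicInteraction μ Ω g (ν * (1 + κ)) j) := by
          gcongr
          exact dyadicLevelMeasure_succ_le hΩ hg hν hc₀ hR₀.le hκ0 hreg h0 hsmall
      _ = _ := by
          rw [hw, ENNReal.mul_rpow_of_nonneg _ _ hκ0, ENNReal.ofReal_mul (by positivity)]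
          ring
  · -- Chebyshev: level sets of measure above `c₀ R₀ ^ ν / 2` occur only at low heights.
    have hthreshold : (2:ℝ) ^ (j + 1) ≤ max 1 (2 * √(2 / (c₀ * R₀ ^ ν))) := by
      have hm : ((2:ℝ) ^ j) ^ 2 * (c₀ * R₀ ^ ν / 2) ≤ 1 := by
        rw [← ENNReal.ofReal_le_one, ENNReal.ofReal_mul (by positivity)]
        calc _ ≤ ENNReal.ofReal (((2:ℝ) ^ j) ^ 2) * a j := by gcongr
          _ ≤ 1 := (ofReal_sq_mul_dyadicLevelMeasure_le hg j).trans hg2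
      refine le_max_of_le_right ?_
      rw [zpow_add_one₀ two_ne_zero, mul_comm]
      gcongr
      rw [Real.le_sqrt (by positivity) (by positivity), le_div_iff₀ (by positivity)]
      linarith
    refine le_add_right ?_
    rw [if_pos hthreshold]
    gcongr
    exact dyadicLevelMeasure_le _

theorem exists_lintegral_rpow_le_of_normalized [SFinite μ] (hΩ : MeasurableSet Ω)
    (hΩfin : μ Ω ≠ ⊤) {ν s p c₀ R₀ : ℝ} (hν : 0 < ν) (hp : 2 < p) (hs : s / ν = 1 / 2 - 1 / p)
    (hc₀ : 0 < c₀) (hR₀ : 0 < R₀) (hreg : IsLowerAhlforsRegular μ Ω ν c₀ R₀) :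
    ∃ C : ℝ≥0∞, C ≠ ⊤ ∧ ∀ g : X → ℝ, Measurable g → (∀ x, 0 ≤ g x) →
      ∫⁻ x in Ω, ENNReal.ofReal (g x ^ 2) ∂μ ≤ 1 → gagliardoEnergy μ Ω (ν + 2 * s) g ≤ 1 →
      ∫⁻ x in Ω, ENNReal.ofReal (g x ^ p) ∂μ ≤ C := by
  set κ := 1 - 2 / p with hκ
  have hκ0 : 0 ≤ κ := by rw [hκ, sub_nonneg, div_le_one (by linarith)]; exact hp.le
  have hκ1 : κ < 1 := by rw [hκ]; linarith [div_pos two_pos (by linarith : (0:ℝ) < p)]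
  have he : ν + 2 * s = ν * (1 + κ) := by
    rw [show s = ν * (1 / 2 - 1 / p) by rw [← hs]; field_simp, hκ]; ring
  set t₁ := max 1 (2 * √(2 / (c₀ * R₀ ^ ν)))
  set K := ENNReal.ofReal (2 ^ p * (2 / c₀) ^ (1 + κ))
  set U := ENNReal.ofReal ((1 - 2 ^ (-p))⁻¹ * t₁ ^ p) * μ Ω
  refine ⟨ENNReal.ofReal (2 ^ p) * max (2 * U) ((2 * (K * ENNReal.ofReal (4 / 3))) ^ (1 - κ)⁻¹),
    by finiteness, fun g hg hg0 hg2 hE => ?_⟩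
  set T : ℤ → ℝ≥0∞ := fun j => ENNReal.ofReal (((2:ℝ) ^ j) ^ p) * dyadicLevelMeasure μ Ω g j
  have hsum : ∑' j, T j ≤ max (2 * U) ((2 * (K * ENNReal.ofReal (4 / 3))) ^ (1 - κ)⁻¹) := by
    refine (tsum_le_of_le_add_mul_rpow hκ0 hκ1
      (u := fun j => (if (2:ℝ) ^ j ≤ t₁ then ENNReal.ofReal (((2:ℝ) ^ j) ^ p) else 0) * μ Ω)
      (fun j => ENNReal.mul_ne_top ENNReal.ofReal_ne_top
        (ne_top_of_le_ne_top hΩfin (dyadicLevelMeasure_le j)))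
      (fun j hj => ?_)
      (rpow_mul_dyadicLevelMeasure_succ_le hΩ hg hν hp.le hκ hc₀ hR₀ hreg hg2)).trans ?_
    · rw [if_pos ((zpow_le_one_of_nonpos₀ one_le_two hj).trans (le_max_left _ _))]
      gcongr
      exact dyadicLevelMeasure_le j
    · have hv : ∑' j : ℤ, ENNReal.ofReal (((2:ℝ) ^ j) ^ (2:ℝ)) *
          dyadicInteraction μ Ω g (ν * (1 + κ)) j ≤ ENNReal.ofReal (4 / 3) := by
        refine (tsum_mul_dyadicInteraction_le hg _).trans ?_
        rw [← he]
        calc _ ≤ ENNReal.ofReal (4 / 3) * 1 := by gcongr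
          _ = _ := mul_one _
      refine max_le_max ?_ (ENNReal.rpow_le_rpow (by gcongr) (inv_nonneg.2 (sub_nonneg.2 hκ1.le)))
      rw [ENNReal.tsum_mul_right]
      gcongr 2 * ?_
      exact mul_le_mul_of_nonneg_right (dyadicPowSum_le (by linarith) t₁) zero_le
  calc ∫⁻ x in Ω, ENNReal.ofReal (g x ^ p) ∂μ
      ≤ ∫⁻ x in Ω, ENNReal.ofReal (2 ^ p) * dyadicPowSum p (g x) ∂μ :=
        lintegral_mono fun x => ofReal_rpow_le_dyadicPowSum (by linarith) (hg0 x)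
    _ = ENNReal.ofReal (2 ^ p) * ∑' j, T j := by
        rw [lintegral_const_mul' _ _ ENNReal.ofReal_ne_top, lintegral_dyadicPowSum hg]
    _ ≤ _ := by gcongr

lemma lintegral_abs_rpow_le_of_normalized {e p : ℝ} {C : ℝ≥0∞}
    (hC : ∀ g : X → ℝ, Measurable g → (∀ x, 0 ≤ g x) →
      ∫⁻ x in Ω, ENNReal.ofReal (g x ^ 2) ∂μ ≤ 1 → gagliardoEnergy μ Ω e g ≤ 1 →
      ∫⁻ x in Ω, ENNReal.ofReal (g x ^ p) ∂μ ≤ C)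
    (hg : Measurable g) {t : ℝ} (ht : 0 < t)
    (hg2 : ∫⁻ x in Ω, ENNReal.ofReal (g x ^ 2) ∂μ ≤ ENNReal.ofReal (t ^ 2))
    (hE : gagliardoEnergy μ Ω e g ≤ ENNReal.ofReal (t ^ 2)) :
    ∫⁻ x in Ω, ENNReal.ofReal (|g x| ^ p) ∂μ ≤ ENNReal.ofReal (t ^ p) * C := by
  set h : X → ℝ := fun x => |g x| / t
  have hh : Measurable h := hg.abs.div_const t
  have hscale : ENNReal.ofReal (t ^ 2)⁻¹ * ENNReal.ofReal (t ^ 2) = 1 := by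
    rw [← ENNReal.ofReal_mul (by positivity), inv_mul_cancel₀ (by positivity), ENNReal.ofReal_one]
  have hh2 : ∫⁻ x in Ω, ENNReal.ofReal (h x ^ 2) ∂μ ≤ 1 := by
    calc ∫⁻ x in Ω, ENNReal.ofReal (h x ^ 2) ∂μ
        = ∫⁻ x in Ω, ENNReal.ofReal (t ^ 2)⁻¹ * ENNReal.ofReal (g x ^ 2) ∂μ := by
          refine lintegral_congr fun x => ?_
          rw [← ENNReal.ofReal_mul (by positivity), div_pow, sq_abs, div_eq_inv_mul]
      _ ≤ ENNReal.ofReal (t ^ 2)⁻¹ * ENNReal.ofReal (t ^ 2) := by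
          rw [lintegral_const_mul _ (hg.pow_const 2).ennreal_ofReal]
          gcongr
      _ = 1 := hscale
  have hhE : gagliardoEnergy μ Ω e h ≤ 1 := by
    calc gagliardoEnergy μ Ω e h
        ≤ ∫⁻ q in Ω ×ˢ Ω, ENNReal.ofReal (t ^ 2)⁻¹ *
            ENNReal.ofReal ((g q.1 - g q.2) ^ 2 / dist q.1 q.2 ^ e) ∂μ.prod μ := by
          refine lintegral_mono fun q => ?_
          rw [← ENNReal.ofReal_mul (by positivity)]
          refine ENNReal.ofReal_le_ofReal ?_
          rw [← mul_div_assoc]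
          gcongr
          rw [div_sub_div_same, div_pow, div_eq_inv_mul]
          exact mul_le_mul_of_nonneg_left (sq_le_sq.2
            (abs_abs_sub_abs_le_abs_sub (g q.1) (g q.2))) (by positivity)
      _ ≤ ENNReal.ofReal (t ^ 2)⁻¹ * ENNReal.ofReal (t ^ 2) := by
          rw [lintegral_const_mul _ (measurable_gagliardo_integrand hg e)]
          exact mul_le_mul_of_nonneg_left hE zero_le
      _ = 1 := hscale
  calc ∫⁻ x in Ω, ENNReal.ofReal (|g x| ^ p) ∂μ
      = ∫⁻ x in Ω, ENNReal.ofReal (t ^ p) * ENNReal.ofReal (h x ^ p) ∂μ := by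
        refine lintegral_congr fun x => ?_
        rw [← ENNReal.ofReal_mul (by positivity), Real.div_rpow (abs_nonneg _) ht.le,
          mul_div_cancel₀ _ (by positivity)]
    _ ≤ ENNReal.ofReal (t ^ p) * C := by
        rw [lintegral_const_mul _ (hh.pow_const p).ennreal_ofReal]
        exact mul_le_mul_of_nonneg_left (hC h hh (fun x => by positivity) hh2 hhE) zero_le

theorem fractional_sobolev_embedding [SFinite μ] (hΩ : MeasurableSet Ω) (hΩfin : μ Ω ≠ ⊤)
    {ν s p c₀ R₀ : ℝ} (hν : 0 < ν) (hp : 2 < p) (hs : s / ν = 1 / 2 - 1 / p) (hc₀ : 0 < c₀)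
    (hR₀ : 0 < R₀) (hreg : IsLowerAhlforsRegular μ Ω ν c₀ R₀) :
    ∃ C > 0, ∀ g : X → ℝ, Measurable g → IntegrableOn (fun x => g x ^ 2) Ω μ →
      IntegrableOn (fun q : X × X => (g q.1 - g q.2) ^ 2 / dist q.1 q.2 ^ (ν + 2 * s))
        (Ω ×ˢ Ω) (μ.prod μ) →
      (∫ x in Ω, |g x| ^ p ∂μ) ^ (1 / p) ≤ C * √((∫ x in Ω, g x ^ 2 ∂μ) +
        ∫ q in Ω ×ˢ Ω, (g q.1 - g q.2) ^ 2 / dist q.1 q.2 ^ (ν + 2 * s) ∂μ.prod μ) := by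
  obtain ⟨C, hCtop, hC⟩ :=
    exists_lintegral_rpow_le_of_normalized hΩ hΩfin hν hp hs hc₀ hR₀ hreg
  have hp0 : 0 < p := by linarith
  refine ⟨(C.toReal + 1) ^ (1 / p), by positivity, fun g hg hg2 hE => ?_⟩
  set A := ∫ x in Ω, g x ^ 2 ∂μ
  set B := ∫ q in Ω ×ˢ Ω, (g q.1 - g q.2) ^ 2 / dist q.1 q.2 ^ (ν + 2 * s) ∂μ.prod μ
  have hEnn : ∀ q : X × X, 0 ≤ (g q.1 - g q.2) ^ 2 / dist q.1 q.2 ^ (ν + 2 * s) :=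
    fun q => by positivity
  have hA0 : 0 ≤ A := integral_nonneg fun x => sq_nonneg _
  have hB0 : 0 ≤ B := integral_nonneg hEnn
  have hA : ENNReal.ofReal A = ∫⁻ x in Ω, ENNReal.ofReal (g x ^ 2) ∂μ :=
    ofReal_integral_eq_lintegral_ofReal hg2 (ae_of_all _ fun x => sq_nonneg _)
  have hB : ENNReal.ofReal B = gagliardoEnergy μ Ω (ν + 2 * s) g :=
    ofReal_integral_eq_lintegral_ofReal hE (ae_of_all _ hEnn)
  have hLp : ∫ x in Ω, |g x| ^ p ∂μ = (∫⁻ x in Ω, ENNReal.ofReal (|g x| ^ p) ∂μ).toReal :=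
    integral_eq_lintegral_of_nonneg_ae (ae_of_all _ fun x => by positivity)
      (hg.abs.pow_const p).aestronglyMeasurable
  rcases (add_nonneg hA0 hB0).eq_or_lt with hzero | hpos
  · have hg0 : (fun x => g x ^ 2) =ᵐ[μ.restrict Ω] 0 :=
      (integral_eq_zero_iff_of_nonneg (fun x => sq_nonneg (g x)) hg2).1 (by linarith)
    have hLp0 : ∫ x in Ω, |g x| ^ p ∂μ = 0 := integral_eq_zero_of_ae <| hg0.mono fun x hx => by
      rw [Pi.zero_apply, pow_eq_zero_iff two_ne_zero] at hx
      simp [hx, Real.zero_rpow hp0.ne']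
    rw [hLp0, Real.zero_rpow (by positivity)]
    positivity
  set t := √(A + B)
  have ht : 0 < t := Real.sqrt_pos.2 hpos
  have ht2 : t ^ 2 = A + B := Real.sq_sqrt hpos.le
  have hlint := lintegral_abs_rpow_le_of_normalized hC hg ht
    (by rw [← hA, ht2]; exact ENNReal.ofReal_le_ofReal (by linarith))
    (by rw [← hB, ht2]; exact ENNReal.ofReal_le_ofReal (by linarith))
  have hbound : ∫ x in Ω, |g x| ^ p ∂μ ≤ t ^ p * (C.toReal + 1) := by
    rw [hLp]
    refine ENNReal.toReal_le_of_le_ofReal (by positivity) (hlint.trans ?_)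
    rw [ENNReal.ofReal_mul (by positivity)]
    gcongr
    exact (ENNReal.le_ofReal_iff_toReal_le hCtop (by positivity)).2 (by linarith)
  calc (∫ x in Ω, |g x| ^ p ∂μ) ^ (1 / p)
      ≤ (t ^ p * (C.toReal + 1)) ^ (1 / p) :=
        Real.rpow_le_rpow (integral_nonneg fun x => by positivity) hbound (by positivity)
    _ = (C.toReal + 1) ^ (1 / p) * t := by
        rw [Real.mul_rpow (by positivity) (by positivity), ← Real.rpow_mul ht.le,
          mul_one_div_cancel hp0.ne', Real.rpow_one, mul_comm]

end MetricMeasure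

section Domains

lemma ofReal_le_volume_ball_inter_Ioo {a b x r : ℝ} (hx : x ∈ Ioo a b) (hr : r ≤ b - a) :
    ENNReal.ofReal r ≤ volume (Metric.ball x r ∩ Ioo a b) := by
  rw [Real.ball_eq_Ioo, Ioo_inter_Ioo, Real.volume_Ioo, ENNReal.ofReal_le_ofReal_iff']
  rcases le_or_gt r 0 with hr0 | hr0
  · exact Or.inr hr0
  obtain ⟨hxa, hxb⟩ := hx
  refine Or.inl ?_
  rcases le_total (x + r) b with h1 | h1 <;> rcases le_total (x - r) a with h2 | h2 <;>
    simp only [min_eq_left, min_eq_right, max_eq_left, max_eq_right, h1, h2] <;> linarith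

lemma isLowerAhlforsRegular_Ioo (a b : ℝ) :
    IsLowerAhlforsRegular volume (Ioo a b) 1 1 (b - a) := fun x hx r _ hr => by
  simpa using ofReal_le_volume_ball_inter_Ioo hx hr

lemma cube_eq_preimage (n : ℕ) :
    {x : EuclideanSpace ℝ (Fin n) | ∀ i, |x i| < 1} =
      (MeasurableEquiv.toLp 2 (Fin n → ℝ)).symm ⁻¹' univ.pi fun _ => Ioo (-1) 1 := by
  ext x
  simp [abs_lt]

lemma measurableSet_cube (n : ℕ) :
    MeasurableSet {x : EuclideanSpace ℝ (Fin n) | ∀ i, |x i| < 1} := by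
  rw [cube_eq_preimage]
  exact (MeasurableEquiv.toLp 2 (Fin n → ℝ)).symm.measurable
    (MeasurableSet.univ_pi fun _ => measurableSet_Ioo)

lemma volume_cube_ne_top (n : ℕ) :
    volume {x : EuclideanSpace ℝ (Fin n) | ∀ i, |x i| < 1} ≠ ⊤ := by
  rw [cube_eq_preimage,
    (EuclideanSpace.volume_preserving_symm_measurableEquiv_toLp (Fin n)).measure_preimage
      (MeasurableSet.univ_pi fun _ => measurableSet_Ioo).nullMeasurableSet, volume_pi_pi]
  simp

lemma isLowerAhlforsRegular_cube {n : ℕ} (hn : 0 < n) :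
    IsLowerAhlforsRegular volume {x : EuclideanSpace ℝ (Fin n) | ∀ i, |x i| < 1} n
      ((√n)⁻¹ ^ n) 1 := by
  intro x hx r hr hr1
  have hsn : 1 ≤ √(n : ℝ) := Real.one_le_sqrt.2 (by exact_mod_cast hn)
  set b := r / √n
  have hb : 0 < b := by positivity
  have hb2 : b ≤ 2 := by rw [div_le_iff₀ (by positivity)]; nlinarith
  set S := univ.pi fun i => Metric.ball (x i) b ∩ Ioo (-1:ℝ) 1
  have hsub : (MeasurableEquiv.toLp 2 (Fin n → ℝ)).symm ⁻¹' S ⊆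
      Metric.ball x r ∩ {x : EuclideanSpace ℝ (Fin n) | ∀ i, |x i| < 1} := by
    intro y hy
    simp only [S, mem_preimage, mem_univ_pi] at hy
    refine ⟨?_, fun i => abs_lt.2 (hy i).2⟩
    rw [Metric.mem_ball, EuclideanSpace.dist_eq, Real.sqrt_lt' hr]
    calc ∑ i, dist (y i) (x i) ^ 2 < ∑ _i : Fin n, b ^ 2 :=
          Finset.sum_lt_sum_of_nonempty ⟨⟨0, hn⟩, Finset.mem_univ _⟩ fun i _ => by
            gcongr
            exact Metric.mem_ball.1 (hy i).1
      _ = r ^ 2 := by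
          rw [Finset.sum_const, Finset.card_univ, Fintype.card_fin, nsmul_eq_mul, div_pow,
            Real.sq_sqrt (Nat.cast_nonneg n)]
          field_simp
  calc ENNReal.ofReal ((√n)⁻¹ ^ n * r ^ (n : ℝ)) = ∏ _i : Fin n, ENNReal.ofReal b := by
        rw [Finset.prod_const, Finset.card_univ, Fintype.card_fin, ← ENNReal.ofReal_pow hb.le,
          Real.rpow_natCast, ← mul_pow, inv_mul_eq_div]
    _ ≤ ∏ i, volume (Metric.ball (x i) b ∩ Ioo (-1:ℝ) 1) := Finset.prod_le_prod' fun i _ =>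
        ofReal_le_volume_ball_inter_Ioo (abs_lt.1 (hx i)) (by linarith)
    _ = volume ((MeasurableEquiv.toLp 2 (Fin n → ℝ)).symm ⁻¹' S) := by
        rw [(EuclideanSpace.volume_preserving_symm_measurableEquiv_toLp (Fin n)).measure_preimage
          (MeasurableSet.univ_pi fun _ =>
            measurableSet_ball.inter measurableSet_Ioo).nullMeasurableSet, volume_pi_pi]
    _ ≤ _ := measure_mono hsub

end Domains

lemma anisotropic_exponent_denominator_pos {d : ℕ} (hd : 2 ≤ d) {p : ℝ}
    (hpd : d = 2 ∨ p < 2 * ((d:ℝ) - 1) / ((d:ℝ) - 2)) :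
    0 < 4 * ((d:ℝ) - 1) - 2 * p * ((d:ℝ) - 2) := by
  rcases hd.eq_or_lt with rfl | hd3
  · norm_num
  have hd2 : (0:ℝ) < d - 2 := by
    have : (3:ℝ) ≤ d := by exact_mod_cast hd3
    linarith
  rcases hpd with rfl | hlt
  · omega
  rw [lt_div_iff₀ hd2] at hlt
  linarith

lemma anisotropic_exponents {d p β l : ℝ} (hd : 2 ≤ d) (hp : 2 < p)
    (hD : 0 < 4 * (d - 1) - 2 * p * (d - 2))
    (hβ : β = (p - 2) / (4 * (d - 1) - 2 * p * (d - 2))) (hl : l = 1 / (2 * β * (d - 1) + 1)) :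
    (0 < l ∧ l < 1) ∧ l * β = 1 / 2 - 1 / p ∧ (1 - l) / 2 / (d - 1) = 1 / 2 - 1 / p := by
  have hp0 : 0 < p := by linarith
  have hden : 2 * β * (d - 1) + 1 = 2 * p / (4 * (d - 1) - 2 * p * (d - 2)) := by
    rw [hβ]
    field_simp
    ring
  have hl' : l = (4 * (d - 1) - 2 * p * (d - 2)) / (2 * p) := by rw [hl, hden, one_div_div]
  refine ⟨⟨by rw [hl']; positivity, ?_⟩, ?_, ?_⟩
  · rw [hl', div_lt_one (by positivity)]
    nlinarith
  · rw [hl', hβ]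
    field_simp
  · rw [hl']
    field_simp
    have : d - 1 ≠ 0 := by linarith
    field_simp
    ring

end FractionalSobolev

open FractionalSobolev

theorem stmt12 (d : ℕ) (hd : 2 ≤ d) (p : ℝ) (hp2 : 2 < p)
    (hpd : d = 2 ∨ p < 2*((d:ℝ)-1)/((d:ℝ)-2))
    (β l : ℝ)
    (hβ : β = (p-2)/(4*((d:ℝ)-1) - 2*p*((d:ℝ)-2)))
    (hl : l = 1/(2*β*((d:ℝ)-1)+1)) :
    (0 < l ∧ l < 1) ∧
    (∃ C > 0, ∀ g : ℝ → ℝ, Measurable g →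
      IntegrableOn (fun x => g x ^ 2) (Set.Ioo 0 1) →
      IntegrableOn
        (fun q : ℝ × ℝ => (g q.1 - g q.2)^2 / |q.1 - q.2| ^ (1 + 2*(l*β)))
        (Set.Ioo 0 1 ×ˢ Set.Ioo 0 1) →
      (∫ x in Set.Ioo (0:ℝ) 1, |g x| ^ p) ^ (1/p) ≤
        C * Real.sqrt ((∫ x in Set.Ioo (0:ℝ) 1, g x ^ 2) +
          ∫ q in Set.Ioo (0:ℝ) 1 ×ˢ Set.Ioo (0:ℝ) 1,
            (g q.1 - g q.2)^2 / |q.1 - q.2| ^ (1 + 2*(l*β)))) ∧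
    (∃ C > 0, ∀ g : EuclideanSpace ℝ (Fin (d-1)) → ℝ, Measurable g →
      IntegrableOn (fun x => g x ^ 2) {x : EuclideanSpace ℝ (Fin (d-1)) | ∀ i, |x i| < 1} →
      IntegrableOn
        (fun q : EuclideanSpace ℝ (Fin (d-1)) × EuclideanSpace ℝ (Fin (d-1)) =>
          (g q.1 - g q.2)^2 / dist q.1 q.2 ^ (((d:ℝ)-1) + 2*((1-l)/2)))
        ({x : EuclideanSpace ℝ (Fin (d-1)) | ∀ i, |x i| < 1} ×ˢ
          {x : EuclideanSpace ℝ (Fin (d-1)) | ∀ i, |x i| < 1}) →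
      (∫ x in {x : EuclideanSpace ℝ (Fin (d-1)) | ∀ i, |x i| < 1}, |g x| ^ p) ^ (1/p) ≤
        C * Real.sqrt
          ((∫ x in {x : EuclideanSpace ℝ (Fin (d-1)) | ∀ i, |x i| < 1}, g x ^ 2) +
            ∫ q in {x : EuclideanSpace ℝ (Fin (d-1)) | ∀ i, |x i| < 1} ×ˢ
                {x : EuclideanSpace ℝ (Fin (d-1)) | ∀ i, |x i| < 1},
              (g q.1 - g q.2)^2 / dist q.1 q.2 ^ (((d:ℝ)-1) + 2*((1-l)/2)))) := by
  obtain ⟨hl01, hlβ, hcube⟩ := anisotropic_exponents (by exact_mod_cast hd) hp2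
    (anisotropic_exponent_denominator_pos hd hpd) hβ hl
  refine ⟨hl01, ?_, ?_⟩
  · obtain ⟨C, hC, hemb⟩ := fractional_sobolev_embedding (μ := volume) (Ω := Ioo (0:ℝ) 1)
      (s := l * β) measurableSet_Ioo (by simp) one_pos hp2 (by rw [div_one, hlβ]) one_pos one_pos
      (by simpa only [sub_zero] using isLowerAhlforsRegular_Ioo (0:ℝ) 1)
    refine ⟨C, hC, fun g hg hg2 hE => ?_⟩
    simpa only [Real.dist_eq, ← Measure.volume_eq_prod] using
      hemb g hg hg2 (by simpa only [Real.dist_eq, Measure.volume_eq_prod] using hE)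
  · have hn : 0 < d - 1 := by omega
    have hν : (0:ℝ) < d - 1 := by
      have : (2:ℝ) ≤ d := by exact_mod_cast hd
      linarith
    have hreg := isLowerAhlforsRegular_cube hn
    rw [Nat.cast_sub (by omega), Nat.cast_one] at hreg
    obtain ⟨C, hC, hemb⟩ := fractional_sobolev_embedding (measurableSet_cube _)
      (volume_cube_ne_top _) hν hp2 hcube (pow_pos (inv_pos.2 (Real.sqrt_pos.2 hν)) _) one_pos
      hreg
    refine ⟨C, hC, fun g hg hg2 hE => ?_⟩
    simpa only [← Measure.volume_eq_prod] using
      hemb g hg hg2 (by simpa only [Measure.volume_eq_prod] using hE)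
end
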